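/- Let L ∈ ℝ^{d×d} be symmetric positive semidefinite with Moore–Penrose pseudoinverse D, and let f : ℝ^d → ℝ be continuously differentiable. Suppose that for all z₁, z₂ ∈ ℝ^d one has (∇f(z₁) − ∇f(z₂))ᵀD(∇f(z₁) − ∇f(z₂)) ≤ (∇f(z₁) − ∇f(z₂))ᵀ(z₁ − z₂) and (I_d − DL)(∇f(z₁) − ∇f(z₂)) = 0. Then for all z₁, z₂ ∈ ℝ^d: 0 ≤ (∇f(z₁) − ∇f(z₂))ᵀ(z₁ − z₂) ≤ (z₁ − z₂)ᵀL(z₁ − z₂). -/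

import Mathlib

open Matrix

/-- Gradient of `f : ℝ^ι → ℝ` in coordinates. -/
noncomputable def grad {ι : Type*} [Fintype ι] [DecidableEq ι]
    (f : (ι → ℝ) → ℝ) (z : ι → ℝ) : ι → ℝ :=
  fun i => fderiv ℝ f z (Pi.single i 1)

/-- `D` is the Moore–Penrose pseudoinverse of `Q`. -/
def IsMoorePenrose {d : ℕ} (Q D : Matrix (Fin d) (Fin d) ℝ) : Prop :=
  Q * D * Q = Q ∧ D * Q * D = D ∧ (Q * D)ᵀ = Q * D ∧ (D * Q)ᵀ = D * Q

/-! The pseudoinverse `D` of a positive semidefinite `L` is again positive semidefinite and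
commutes with `L`. For `g` in the range of `L`, i.e. `D L g = g`, expanding
`0 ≤ (x - D g)ᵀ L (x - D g)` gives `2 gᵀ x - gᵀ D g ≤ xᵀ L x`. With `g` and `x` the increments of
`∇f` and of `z`, the hypothesis `gᵀ D g ≤ gᵀ x` then yields
`0 ≤ gᵀ D g ≤ gᵀ x ≤ 2 gᵀ x - gᵀ D g ≤ xᵀ L x`. -/

lemma Matrix.IsSymm.sub_dotProduct_mulVec_sub {n R : Type*} [Fintype n] [CommRing R]
    {Q : Matrix n n R} (hQ : Q.IsSymm) (x y : n → R) :
    (x - y) ⬝ᵥ Q *ᵥ (x - y) = x ⬝ᵥ Q *ᵥ x - 2 * (x ⬝ᵥ Q *ᵥ y) + y ⬝ᵥ Q *ᵥ y := by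
  have hswap : y ⬝ᵥ Q *ᵥ x = x ⬝ᵥ Q *ᵥ y := by
    rw [dotProduct_mulVec, ← mulVec_transpose, hQ.eq, dotProduct_comm]
  rw [mulVec_sub, dotProduct_sub, sub_dotProduct, sub_dotProduct, hswap]
  ring

namespace IsMoorePenrose

variable {d : ℕ} {Q D : Matrix (Fin d) (Fin d) ℝ}

theorem transpose_mul_eq (hD : IsMoorePenrose Q D) (hQ : Q.IsSymm) : Dᵀ * Q = Q * D := by
  rw [← hD.2.2.1, transpose_mul, hQ.eq]

theorem mul_transpose_eq (hD : IsMoorePenrose Q D) (hQ : Q.IsSymm) : Q * Dᵀ = D * Q := by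
  rw [← hD.2.2.2, transpose_mul, hQ.eq]

/-- Both products equal `(Q D)(D Q)`: expand `Q D = Dᵀ Q = Dᵀ (Q D Q)` and
`D Q = Q Dᵀ = (Q D Q) Dᵀ`. -/
theorem mul_comm (hD : IsMoorePenrose Q D) (hQ : Q.IsSymm) : Q * D = D * Q := by
  calc Q * D = Dᵀ * (Q * D * Q) := by rw [hD.1, hD.transpose_mul_eq hQ]
    _ = (Dᵀ * Q) * (D * Q) := by simp only [Matrix.mul_assoc]
    _ = (Q * D) * (Q * Dᵀ) := by rw [hD.transpose_mul_eq hQ, hD.mul_transpose_eq hQ]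
    _ = D * Q := by rw [← Matrix.mul_assoc, hD.1, hD.mul_transpose_eq hQ]

theorem isSymm (hD : IsMoorePenrose Q D) (hQ : Q.IsSymm) : D.IsSymm := by
  calc Dᵀ = (D * Q * D)ᵀ := by rw [hD.2.1]
    _ = (Dᵀ * Q) * Dᵀ := by rw [transpose_mul, transpose_mul, hQ.eq, Matrix.mul_assoc]
    _ = D * (Q * Dᵀ) := by rw [hD.transpose_mul_eq hQ, hD.mul_comm hQ, Matrix.mul_assoc]
    _ = D * (Q * D) := by rw [hD.mul_transpose_eq hQ, hD.mul_comm hQ]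
    _ = D := by rw [← Matrix.mul_assoc, hD.2.1]

theorem posSemidef (hD : IsMoorePenrose Q D) (hQ : Q.PosSemidef) : D.PosSemidef := by
  have hQsymm := isHermitian_iff_isSymm.mp hQ.isHermitian
  have h := hQ.conjTranspose_mul_mul_same D
  rwa [conjTranspose_eq_transpose_of_trivial, (hD.isSymm hQsymm).eq, hD.2.1] at h

theorem two_mul_dotProduct_sub_le (hD : IsMoorePenrose Q D) (hQ : Q.PosSemidef)
    {g : Fin d → ℝ} (hg : (D * Q) *ᵥ g = g) (x : Fin d → ℝ) :
    2 * (g ⬝ᵥ x) - g ⬝ᵥ D *ᵥ g ≤ x ⬝ᵥ Q *ᵥ x := by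
  have hQsymm := isHermitian_iff_isSymm.mp hQ.isHermitian
  have hcross : x ⬝ᵥ Q *ᵥ (D *ᵥ g) = g ⬝ᵥ x := by
    rw [mulVec_mulVec, hD.mul_comm hQsymm, hg, dotProduct_comm]
  have hsquare : D *ᵥ g ⬝ᵥ Q *ᵥ (D *ᵥ g) = g ⬝ᵥ D *ᵥ g := by
    rw [dotProduct_comm, dotProduct_mulVec, ← mulVec_transpose, (hD.isSymm hQsymm).eq,
      mulVec_mulVec, mulVec_mulVec, hD.2.1, dotProduct_comm]
  have hdefect := hQ.dotProduct_mulVec_nonneg (x - D *ᵥ g)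
  rw [star_trivial, hQsymm.sub_dotProduct_mulVec_sub, hcross, hsquare] at hdefect
  linarith

end IsMoorePenrose

theorem stmt_2 {d : ℕ} (L D : Matrix (Fin d) (Fin d) ℝ) (hL : L.PosSemidef)
    (hD : IsMoorePenrose L D)
    (f : (Fin d → ℝ) → ℝ)
    (h : ∀ z₁ z₂ : Fin d → ℝ,
      (grad f z₁ - grad f z₂) ⬝ᵥ D.mulVec (grad f z₁ - grad f z₂)
        ≤ (grad f z₁ - grad f z₂) ⬝ᵥ (z₁ - z₂) ∧
      (1 - D * L).mulVec (grad f z₁ - grad f z₂) = 0) :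
    ∀ z₁ z₂ : Fin d → ℝ,
      0 ≤ (grad f z₁ - grad f z₂) ⬝ᵥ (z₁ - z₂) ∧
      (grad f z₁ - grad f z₂) ⬝ᵥ (z₁ - z₂) ≤ (z₁ - z₂) ⬝ᵥ L.mulVec (z₁ - z₂) := by
  intro z₁ z₂
  obtain ⟨hmono, hrange⟩ := h z₁ z₂
  rw [sub_mulVec, one_mulVec, sub_eq_zero, eq_comm] at hrange
  have hupper := hD.two_mul_dotProduct_sub_le hL hrange (z₁ - z₂)
  have hDnonneg := (hD.posSemidef hL).dotProduct_mulVec_nonneg (grad f z₁ - grad f z₂)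
  rw [star_trivial] at hDnonneg
  exact ⟨hDnonneg.trans hmono, by linarith⟩
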